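/- For every positive integer m, the 4-coloring of [8m+7] with prefix A, B, C, C, then the block ABCC repeated m times, then the block DDAB repeated m times, then D, B, A, contains no rainbow 4-term arithmetic progression. -/
import Mathlib


inductive Color | A | B | C | D
  deriving DecidableEq

open Color

/-- A coloring `c` of `{1,...,n}` contains a rainbow 4-term AP. -/
def RainbowAP4 (n : ℕ) (c : ℕ → Color) : Prop :=
  ∃ t d : ℕ, 1 ≤ t ∧ 1 ≤ d ∧ t + 3*d ≤ n ∧
    c t ≠ c (t+d) ∧ c t ≠ c (t+2*d) ∧ c t ≠ c (t+3*d) ∧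
    c (t+d) ≠ c (t+2*d) ∧ c (t+d) ≠ c (t+3*d) ∧ c (t+2*d) ≠ c (t+3*d)

/-- The coloring for STATEMENT 9. -/
def col (m i : ℕ) : Color :=
  if i = 1 then A else if i = 2 then B else if i ≤ 4 then C else if i ≤ 4*m+4 then (if i % 4 = 1 then A else if i % 4 = 2 then B else C) else if i ≤ 8*m+4 then (if i % 4 = 1 ∨ i % 4 = 2 then D else if i % 4 = 3 then A else B) else if i = 8*m+5 then D else if i = 8*m+6 then B else A

/-- Cleaner form of the coloring. -/
def gcol (m i : ℕ) : Color :=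
  if i ≤ 4*m+4 then (if i % 4 = 1 then A else if i % 4 = 2 then B else C)
  else if i = 8*m+6 then B
  else if i % 4 = 1 then D else if i % 4 = 2 then D else if i % 4 = 3 then A else B

lemma col_eq_gcol (m i : ℕ) (h1 : 1 ≤ i) (h2 : i ≤ 8*m+7) : col m i = gcol m i := by
  unfold col gcol
  split_ifs <;> first | rfl | omega | (exfalso; omega)

set_option maxHeartbeats 4000000 in
theorem stmt_9 (m : ℕ) (hm : 0 < m) :
    ¬ RainbowAP4 (8*m+7) (col m) := by
  rintro ⟨t, d, ht, hd, hn, h12, h13, h14, h23, h24, h34⟩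
  have e1 : col m t = gcol m t := col_eq_gcol m t (by omega) (by omega)
  have e2 : col m (t+d) = gcol m (t+d) := col_eq_gcol m (t+d) (by omega) (by omega)
  have e3 : col m (t+2*d) = gcol m (t+2*d) := col_eq_gcol m (t+2*d) (by omega) (by omega)
  have e4 : col m (t+3*d) = gcol m (t+3*d) := col_eq_gcol m (t+3*d) (by omega) (by omega)
  simp only [e1, e2, e3, e4] at h12 h13 h14 h23 h24 h34
  clear e1 e2 e3 e4
  have hA : ¬ (t = 8*m+6) := by omega
  have hB : ¬ (t+d = 8*m+6) := by omega
  unfold gcol at h12 h13 h14 h23 h24 h34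
  have h4t : t % 4 = 0 ∨ t % 4 = 1 ∨ t % 4 = 2 ∨ t % 4 = 3 := by omega
  have h4d : d % 4 = 0 ∨ d % 4 = 1 ∨ d % 4 = 2 ∨ d % 4 = 3 := by omega
  rcases h4t with ht4|ht4|ht4|ht4 <;> rcases h4d with hd4|hd4|hd4|hd4 <;>
    simp [Nat.add_mod, Nat.mul_mod, ht4, hd4, hA, hB] at h12 h13 h14 h23 h24 h34 <;>
    split_ifs at h12 h13 h14 h23 h24 h34 <;>
      first
        | exact h12 rfl | exact h13 rfl | exact h14 rfl
        | exact h23 rfl | exact h24 rfl | exact h34 rfl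
        | omega
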